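/- Let G be a non-trivial n-player game, i.e. there exist a player i, strategies k ≠ l in Fin (d i), and a profile s with s i = k such that X i s ≠ X i (Function.update s i l). Suppose the correlated equilibrium polytope P_G has maximal dimension D − 1, where D = ∏_i d i. Then every Nash equilibrium of G — every p ∈ P_G such that p s = ∏_i a_i (s i) for some probability vectors a_i : Fin (d i) → ℝ (a_i ≥ 0, ∑ a_i = 1) — lies on the relative boundary of P_G; i.e. no such p belongs to the intrinsic interior of P_G. -/

import Mathlib

/-!
At a Nash equilibrium `p = ∏ᵢ aᵢ`, the gains of player `i` from the deviations `k → l` and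
`l → k` are `aᵢ(k) · A` and `-aᵢ(l) · A` for one and the same number `A`, so one of these two
incentive constraints is tight at `p`. If `P_G` has maximal dimension, its affine span is the whole
hyperplane `∑ₛ q s = 1`, so at a relative interior point a tight linear constraint must vanish on
every direction `e_s - e_t`. For the profile `s` with `s i = k` witnessing non-triviality and
`t = update s i l`, both constraints take the nonzero value `X i s - X i t` on `e_s - e_t`.
-/

/-- The correlated equilibrium polytope of an `n`-player game. -/
def CorrelatedEqPolytope {n : ℕ} (d : Fin n → ℕ)
    (X : (i : Fin n) → ((j : Fin n) → Fin (d j)) → ℝ) :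
    Set (((j : Fin n) → Fin (d j)) → ℝ) :=
  {p | (∀ s, 0 ≤ p s) ∧ (∑ s, p s = 1) ∧
    ∀ (i : Fin n) (k l : Fin (d i)),
      0 ≤ ∑ s ∈ Finset.univ.filter (fun s => s i = k),
        (X i s - X i (Function.update s i l)) * p s}

open Finset Function Filter Topology Module

section IntrinsicInterior

variable {E : Type*} [AddCommGroup E] [Module ℝ E] [TopologicalSpace E] [IsTopologicalAddGroup E]
  [ContinuousSMul ℝ E] {s : Set E} {p v : E}

theorem eventually_add_smul_mem_of_mem_intrinsicInterior (hp : p ∈ intrinsicInterior ℝ s)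
    (hv : v ∈ (affineSpan ℝ s).direction) : ∀ᶠ τ : ℝ in 𝓝 0, p + τ • v ∈ s := by
  obtain ⟨y, hy, rfl⟩ := hp
  let line : ℝ → affineSpan ℝ s := fun τ =>
    ⟨y + τ • v, add_comm (y : E) _ ▸ AffineSubspace.vadd_mem_of_mem_direction
      (Submodule.smul_mem _ τ hv) y.2⟩
  have hline : Tendsto line (𝓝 0) (𝓝 y) := by
    have : Continuous line := by fun_prop
    simpa [line] using this.tendsto 0
  exact hline.eventually (mem_interior_iff_mem_nhds.1 hy)

theorem LinearMap.eq_zero_of_isMinOn_of_mem_intrinsicInterior (f : E →ₗ[ℝ] ℝ)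
    (hmin : IsMinOn f s p) (hp : p ∈ intrinsicInterior ℝ s)
    (hv : v ∈ (affineSpan ℝ s).direction) : f v = 0 := by
  have hlocal : IsLocalMin (fun τ : ℝ => f p + τ * f v) 0 := by
    filter_upwards [eventually_add_smul_mem_of_mem_intrinsicInterior hp hv] with τ hτ
    simpa using hmin hτ
  exact hlocal.hasDerivAt_eq_zero ((hasDerivAt_mul_const (f v)).const_add (f p))

end IntrinsicInterior

theorem mem_direction_affineSpan_of_sum_eq_zero {ι : Type*} [Fintype ι] [Nonempty ι]
    {P : Set (ι → ℝ)} (hP : ∀ q ∈ P, ∑ s, q s = 1)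
    (hdim : finrank ℝ (affineSpan ℝ P).direction = Fintype.card ι - 1)
    {v : ι → ℝ} (hv : ∑ s, v s = 0) : v ∈ (affineSpan ℝ P).direction := by
  classical
  let mass : (ι → ℝ) →ₗ[ℝ] ℝ := ∑ s, LinearMap.proj s
  have hmass (q : ι → ℝ) : mass q = ∑ s, q s := by simp [mass]
  have hle : (affineSpan ℝ P).direction ≤ LinearMap.ker mass := by
    rw [direction_affineSpan, vectorSpan_def, Submodule.span_le]
    rintro _ ⟨q, hq, q', hq', rfl⟩
    simp [hmass, hP q hq, hP q' hq']
  have hsurj : LinearMap.range mass = ⊤ := by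
    refine LinearMap.range_eq_top.2 fun r => ⟨Pi.single (Classical.arbitrary ι) r, ?_⟩
    simp [hmass]
  have hker : finrank ℝ (LinearMap.ker mass) = Fintype.card ι - 1 := by
    have := mass.finrank_range_add_finrank_ker
    rw [hsurj, finrank_top, finrank_self, finrank_fintype_fun_eq_card] at this
    omega
  rw [Submodule.eq_of_le_of_finrank_eq hle (hdim.trans hker.symm)]
  simpa [hmass] using hv

theorem sum_filter_eq_sum_filter_update {ι : Type*} [Fintype ι] [DecidableEq ι] {β : ι → Type*}
    [∀ i, Fintype (β i)] [∀ i, DecidableEq (β i)] {M : Type*} [AddCommMonoid M]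
    (i : ι) (k l : β i) (G : (∀ j, β j) → M) :
    ∑ s ∈ univ.filter (fun s => s i = l), G s
      = ∑ s ∈ univ.filter (fun s => s i = k), G (update s i l) := by
  refine (sum_nbij' (update · i l) (update · i k) ?_ ?_ ?_ ?_ fun _ _ => rfl).symm <;>
    simp +contextual [update_eq_self_iff]

section DeviationGain

variable {ι : Type*} [Fintype ι] [DecidableEq ι] {β : ι → Type*} [∀ i, Fintype (β i)]
  [∀ i, DecidableEq (β i)]

/-- The expected gain, under the distribution `q` on profiles, of a player with payoff `u` who
plays `l` whenever recommended `k`. -/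
def deviationGain (u : (∀ j, β j) → ℝ) (i : ι) (k l : β i) : ((∀ j, β j) → ℝ) →ₗ[ℝ] ℝ where
  toFun q := ∑ s ∈ univ.filter (fun s => s i = k), (u s - u (update s i l)) * q s
  map_add' q q' := by simp only [Pi.add_apply, mul_add, sum_add_distrib]
  map_smul' c q := by simp only [Pi.smul_apply, smul_eq_mul, mul_sum, RingHom.id_apply, mul_left_comm]

theorem deviationGain_apply (u : (∀ j, β j) → ℝ) (i : ι) (k l : β i) (q : (∀ j, β j) → ℝ) :
    deviationGain u i k l q
      = ∑ s ∈ univ.filter (fun s => s i = k), (u s - u (update s i l)) * q s :=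
  rfl

theorem deviationGain_single_sub_single (u : (∀ j, β j) → ℝ) {i : ι} {k l : β i} (hkl : k ≠ l)
    {s : ∀ j, β j} (hs : s i = k) :
    deviationGain u i k l (Pi.single s 1 - Pi.single (update s i l) 1) = u s - u (update s i l) := by
  simp [deviationGain_apply, mul_sub, sum_sub_distrib, Pi.single_apply, hs, hkl.symm]

theorem deviationGain_swap_single_sub_single (u : (∀ j, β j) → ℝ) {i : ι} {k l : β i}
    (hkl : k ≠ l) {s : ∀ j, β j} (hs : s i = k) :
    deviationGain u i l k (Pi.single s 1 - Pi.single (update s i l) 1) = u s - u (update s i l) := by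
  have hback : update (update s i l) i k = s := by simp [← hs]
  have h := deviationGain_single_sub_single u hkl.symm (update_self i l s)
  rw [hback] at h
  rw [← neg_sub, map_neg, h, neg_sub]

theorem deviationGain_mul_deviationGain_swap_nonpos (u : (∀ j, β j) → ℝ)
    (a : ∀ i, β i → ℝ) (ha : ∀ i x, 0 ≤ a i x) (i : ι) (k l : β i) :
    deviationGain u i k l (fun s => ∏ j, a j (s j))
      * deviationGain u i l k (fun s => ∏ j, a j (s j)) ≤ 0 := by
  set others : (∀ j, β j) → ℝ := fun s => ∏ j ∈ univ.erase i, a j (s j)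
  have hprod (s : ∀ j, β j) : ∏ j, a j (s j) = a i (s i) * others s :=
    (mul_prod_erase univ (fun j => a j (s j)) (mem_univ i)).symm
  have hothers (s : ∀ j, β j) (x : β i) : others (update s i x) = others s :=
    prod_congr rfl fun j hj => by rw [update_of_ne (ne_of_mem_erase hj)]
  set A := ∑ s ∈ univ.filter (fun s => s i = k), (u s - u (update s i l)) * others s
  have hkl : deviationGain u i k l (fun s => ∏ j, a j (s j)) = a i k * A := by
    rw [deviationGain_apply, mul_sum]
    refine sum_congr rfl fun s hs => ?_
    rw [hprod, (mem_filter.1 hs).2]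
    ring
  have hlk : deviationGain u i l k (fun s => ∏ j, a j (s j)) = -(a i l * A) := by
    rw [deviationGain_apply, sum_filter_eq_sum_filter_update i k l, mul_sum, ← sum_neg_distrib]
    refine sum_congr rfl fun s hs => ?_
    have hback : update (update s i l) i k = s := by simp [← (mem_filter.1 hs).2]
    rw [hback, hprod, hothers, update_self]
    ring
  rw [hkl, hlk]
  nlinarith [mul_nonneg (mul_nonneg (ha i k) (ha i l)) (sq_nonneg A)]

end DeviationGain

theorem deviationGain_nonneg_of_mem_correlatedEqPolytope {n : ℕ} {d : Fin n → ℕ}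
    {X : (i : Fin n) → ((j : Fin n) → Fin (d j)) → ℝ} {q : ((j : Fin n) → Fin (d j)) → ℝ}
    (hq : q ∈ CorrelatedEqPolytope d X) (i : Fin n) (k l : Fin (d i)) :
    0 ≤ deviationGain (X i) i k l q :=
  hq.2.2 i k l

theorem nash_not_mem_intrinsicInterior_of_maximal_dim_general
    {n : ℕ} (d : Fin n → ℕ)
    (X : (i : Fin n) → ((j : Fin n) → Fin (d j)) → ℝ)
    (hnontriv : ∃ (i : Fin n) (k l : Fin (d i)), k ≠ l ∧
      ∃ s : (j : Fin n) → Fin (d j), s i = k ∧ X i s ≠ X i (Function.update s i l))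
    (hdim : Module.finrank ℝ (affineSpan ℝ (CorrelatedEqPolytope d X)).direction
      = (∏ i, d i) - 1) :
    ∀ p ∈ CorrelatedEqPolytope d X,
      (∃ a : (i : Fin n) → Fin (d i) → ℝ,
        (∀ i j, 0 ≤ a i j) ∧ (∀ i, ∑ j, a i j = 1) ∧
        ∀ s : (j : Fin n) → Fin (d j), p s = ∏ i, a i (s i)) →
      p ∉ intrinsicInterior ℝ (CorrelatedEqPolytope d X) := by
  rintro p hp ⟨a, ha, -, hpa⟩ hint
  obtain rfl : p = fun s => ∏ i, a i (s i) := funext hpa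
  obtain ⟨i, k, l, hkl, s, rfl, hX⟩ := hnontriv
  have : Nonempty ((j : Fin n) → Fin (d j)) := ⟨s⟩
  have hv : Pi.single s 1 - Pi.single (update s i l) 1
      ∈ (affineSpan ℝ (CorrelatedEqPolytope d X)).direction :=
    mem_direction_affineSpan_of_sum_eq_zero (fun q hq => hq.2.1) (by simpa using hdim) (by simp)
  have htight (k' l' : Fin (d i)) (h : deviationGain (X i) i k' l' (fun s => ∏ i, a i (s i)) = 0) :
      deviationGain (X i) i k' l' (Pi.single s 1 - Pi.single (update s i l) 1) = 0 :=
    LinearMap.eq_zero_of_isMinOn_of_mem_intrinsicInterior _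
      (fun q hq => h ▸ deviationGain_nonneg_of_mem_correlatedEqPolytope hq i k' l') hint hv
  have hone_tight := mul_eq_zero.1 <| le_antisymm
    (deviationGain_mul_deviationGain_swap_nonpos (X i) a ha i (s i) l)
    (mul_nonneg (deviationGain_nonneg_of_mem_correlatedEqPolytope hp i (s i) l)
      (deviationGain_nonneg_of_mem_correlatedEqPolytope hp i l (s i)))
  refine hX (sub_eq_zero.1 ?_)
  rcases hone_tight with h | h
  · rw [← deviationGain_single_sub_single (X i) hkl rfl]
    exact htight _ _ h
  · rw [← deviationGain_swap_single_sub_single (X i) hkl rfl]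
    exact htight _ _ h

/-- For a non-trivial game whose correlated equilibrium polytope has maximal dimension,
every Nash equilibrium lies on the relative boundary of the polytope. -/
theorem nash_not_mem_intrinsicInterior_of_maximal_dim
    {n : ℕ} (d : Fin n → ℕ) (hd : ∀ i, 1 ≤ d i)
    (X : (i : Fin n) → ((j : Fin n) → Fin (d j)) → ℝ)
    (hnontriv : ∃ (i : Fin n) (k l : Fin (d i)), k ≠ l ∧
      ∃ s : (j : Fin n) → Fin (d j), s i = k ∧ X i s ≠ X i (Function.update s i l))
    (hdim : Module.finrank ℝ (affineSpan ℝ (CorrelatedEqPolytope d X)).direction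
      = (∏ i, d i) - 1) :
    ∀ p ∈ CorrelatedEqPolytope d X,
      (∃ a : (i : Fin n) → Fin (d i) → ℝ,
        (∀ i j, 0 ≤ a i j) ∧ (∀ i, ∑ j, a i j = 1) ∧
        ∀ s : (j : Fin n) → Fin (d j), p s = ∏ i, a i (s i)) →
      p ∉ intrinsicInterior ℝ (CorrelatedEqPolytope d X) :=
  nash_not_mem_intrinsicInterior_of_maximal_dim_general d X hnontriv hdim
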